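/- arXiv:1509.05444 — 4 statements merged into one kernel-verified Lean document; each statement's English description precedes it below -/
import Mathlib

section
/- Let α > 0 satisfy α + 1/(1+δ)² < 1 and let R ≥ (|b|/α)^{1/2}. Then for every w = (x,y,z) ∈ V⁺, writing H⁻¹(w) = (x₁,y₁,z₁), one has |z₁ − z³/(ab)| < (α + 1/(1+δ)²)·|z|³/|ab|. -/
open Complex Filter Topology

/-- The quadratic automorphism `H(x,y,z) = (xy + az, x² + by, x)` of `ℂ³`. -/
noncomputable def H (a b : ℂ) (w : ℂ × ℂ × ℂ) : ℂ × ℂ × ℂ :=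
  (w.1 * w.2.1 + a * w.2.2, w.1 ^ 2 + b * w.2.1, w.1)

/-- The inverse automorphism
`H⁻¹(x,y,z) = (z, (y − z²)/b, (x − z(y − z²)/b)/a)`. -/
noncomputable def Hinv (a b : ℂ) (w : ℂ × ℂ × ℂ) : ℂ × ℂ × ℂ :=
  (w.2.2, (w.2.1 - w.2.2 ^ 2) / b,
    (w.1 - w.2.2 * ((w.2.1 - w.2.2 ^ 2) / b)) / a)

/-- `V⁺ = {(x,y,z) : |z| > max{R, |x|, (1+δ)|y|^{1/2}}}`. -/
def Vplus (δ R : ℝ) : Set (ℂ × ℂ × ℂ) :=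
  {w | ‖w.2.2‖ >
    max R (max ‖w.1‖ ((1 + δ) * Real.sqrt ‖w.2.1‖))}

/-! The cubic term cancels exactly: `z₁ − z³/(ab) = (bx − zy)/(ab)`. On `V⁺` the two terms of
the numerator are controlled separately: `|x||b| < |z| · α|z|²` since `|b| ≤ αR² < α|z|²`, and
`|z||y| < |z| · |z|²/(1+δ)²`. -/

lemma Hinv_snd_snd_sub_cube_div {a b : ℂ} (ha : a ≠ 0) (hb : b ≠ 0) (w : ℂ × ℂ × ℂ) :
    (Hinv a b w).2.2 - w.2.2 ^ 3 / (a * b) = (w.1 * b - w.2.2 * w.2.1) / (a * b) := by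
  simp only [Hinv]
  field_simp
  ring

lemma lt_mul_sq_of_sqrt_div_lt {c α Z : ℝ} (hα : 0 < α) (h : √(c / α) < Z) : c < α * Z ^ 2 := by
  rw [Real.sqrt_lt' ((Real.sqrt_nonneg _).trans_lt h), div_lt_iff₀ hα] at h
  linarith

lemma lt_sq_div_sq_of_mul_sqrt_lt {c Y Z : ℝ} (hc : 0 < c) (h : c * √Y < Z) :
    Y < Z ^ 2 / c ^ 2 := by
  have hZ : 0 < Z / c := div_pos ((by positivity : 0 ≤ c * √Y).trans_lt h) hc
  rw [← div_pow, ← Real.sqrt_lt' hZ, lt_div_iff₀' hc]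
  exact h

lemma norm_mul_sub_mul_lt_of_mem_Vplus {b : ℂ} {δ α R : ℝ} (hδ : 0 < 1 + δ) (hα : 0 < α)
    (hR : √(‖b‖ / α) ≤ R) {w : ℂ × ℂ × ℂ} (hw : w ∈ Vplus δ R) :
    ‖w.1 * b - w.2.2 * w.2.1‖ < (α + 1 / (1 + δ) ^ 2) * ‖w.2.2‖ ^ 3 := by
  obtain ⟨hzR, hzx, hzy⟩ : R < ‖w.2.2‖ ∧ ‖w.1‖ < ‖w.2.2‖ ∧ (1 + δ) * √‖w.2.1‖ < ‖w.2.2‖ := by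
    simpa only [Vplus, Set.mem_ofPred_eq, gt_iff_lt, max_lt_iff] using hw
  have hz : 0 < ‖w.2.2‖ := (norm_nonneg _).trans_lt hzx
  have hb : ‖b‖ < α * ‖w.2.2‖ ^ 2 := lt_mul_sq_of_sqrt_div_lt hα (hR.trans_lt hzR)
  have hy : ‖w.2.1‖ < ‖w.2.2‖ ^ 2 / (1 + δ) ^ 2 := lt_sq_div_sq_of_mul_sqrt_lt hδ hzy
  calc ‖w.1 * b - w.2.2 * w.2.1‖ ≤ ‖w.1‖ * ‖b‖ + ‖w.2.2‖ * ‖w.2.1‖ := by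
        simpa only [norm_mul] using norm_sub_le (w.1 * b) (w.2.2 * w.2.1)
    _ < ‖w.2.2‖ * (α * ‖w.2.2‖ ^ 2) + ‖w.2.2‖ * (‖w.2.2‖ ^ 2 / (1 + δ) ^ 2) :=
        add_lt_add (mul_lt_mul'' hzx hb (norm_nonneg _) (norm_nonneg _))
          (mul_lt_mul_of_pos_left hy hz)
    _ = (α + 1 / (1 + δ) ^ 2) * ‖w.2.2‖ ^ 3 := by ring

theorem stmt0_general (a b : ℂ) (ha : a ≠ 0) (hb : b ≠ 0) (δ : ℝ) (hδ : 0 < δ)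
    (α : ℝ) (hα : 0 < α) (R : ℝ)
    (hR : R ≥ Real.sqrt (‖b‖ / α))
    (w : ℂ × ℂ × ℂ) (hw : w ∈ Vplus δ R) :
    ‖(Hinv a b w).2.2 - w.2.2 ^ 3 / (a * b)‖ <
      (α + 1 / (1 + δ) ^ 2) * ‖w.2.2‖ ^ 3 / ‖a * b‖ := by
  rw [Hinv_snd_snd_sub_cube_div ha hb, norm_div]
  exact div_lt_div_of_pos_right
    (norm_mul_sub_mul_lt_of_mem_Vplus (by linarith) hα hR hw)
    (norm_pos_iff.2 (mul_ne_zero ha hb))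

/-- for `α > 0` with `α + 1/(1+δ)² < 1` and `R ≥ (|b|/α)^{1/2}`,
for every `w = (x,y,z) ∈ V⁺`, writing `H⁻¹(w) = (x₁,y₁,z₁)`, one has
`|z₁ − z³/(ab)| < (α + 1/(1+δ)²)·|z|³/|ab|`. -/
theorem stmt0 (a b : ℂ) (ha : a ≠ 0) (hb : b ≠ 0) (δ : ℝ) (hδ : 0 < δ)
    (hbδ : ‖b‖ = 1 + δ) (α : ℝ) (hα : 0 < α)
    (hα1 : α + 1 / (1 + δ) ^ 2 < 1) (R : ℝ)
    (hR : R ≥ Real.sqrt (‖b‖ / α))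
    (w : ℂ × ℂ × ℂ) (hw : w ∈ Vplus δ R) :
    ‖(Hinv a b w).2.2 - w.2.2 ^ 3 / (a * b)‖ <
      (α + 1 / (1 + δ) ^ 2) * ‖w.2.2‖ ^ 3 / ‖a * b‖ :=
  stmt0_general a b ha hb δ hδ α hα R hR w hw
end

section
/- There exists R₀ > 1 such that for all R > R₀ and every w ∈ V⁺ there is a constant c = c(w) > 1 with |zₙ| ≥ c^{3ⁿ} for all n ≥ 0, where H⁻ⁿ(w) = (xₙ,yₙ,zₙ). In particular, the backward orbit of every point of V⁺ escapes to infinity at the super-exponential rate (const)^{3ⁿ}. -/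
open Complex Filter Topology

/-- `U⁻ = ⋃_{n≥0} Hⁿ(V⁺)`. -/
noncomputable def Uminus (a b : ℂ) (δ R : ℝ) : Set (ℂ × ℂ × ℂ) :=
  ⋃ n : ℕ, (H a b)^[n] '' Vplus δ R

/-- `K⁻ = ℂ³ \ U⁻`. -/
noncomputable def Kminus (a b : ℂ) (δ R : ℝ) : Set (ℂ × ℂ × ℂ) :=
  (Uminus a b δ R)ᶜ

/-!
On `V⁺` we have `(1+δ)²|y| < |z|²`, so `|y - z²|` is comparable to `|z|²`; since `|x| < |z|`, the
new last coordinate `z' = (x - z (y - z²)/b)/a` then has size at least a constant times `|z|³`.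
For `R` large this gives `|z'| ≥ 2(1+δ)|z|`, which makes `V⁺` invariant under `H⁻¹`, and
`|zₙ₊₁| ≥ k |zₙ|³` along the backward orbit with `k ≤ 1`. Then `vₙ = k |zₙ|` satisfies
`vₙ₊₁ ≥ vₙ³`, so `|zₙ| ≥ vₙ ≥ v₀^{3ⁿ}`, and `c = k |z₀| > 1` as soon as `R > 1/k`.
-/

theorem pow_pow_le_of_pow_le_succ {u : ℕ → ℝ} {c : ℝ} {p : ℕ} (hp : 0 < p) (hc0 : 0 ≤ c)
    (hc1 : c ≤ 1) (hu : ∀ n, 0 ≤ u n) (h : ∀ n, c ^ (p - 1) * u n ^ p ≤ u (n + 1)) (n : ℕ) :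
    (c * u 0) ^ p ^ n ≤ u n := by
  have hv : ∀ n, (c * u 0) ^ p ^ n ≤ c * u n := by
    intro n
    induction n with
    | zero => simp
    | succ n ih =>
      calc (c * u 0) ^ p ^ (n + 1) = ((c * u 0) ^ p ^ n) ^ p := by rw [pow_succ, pow_mul]
        _ ≤ (c * u n) ^ p := pow_le_pow_left₀ (by have := hu 0; positivity) ih p
        _ = c * (c ^ (p - 1) * u n ^ p) := by rw [mul_pow, ← mul_assoc, mul_pow_sub_one hp.ne']
        _ ≤ c * u (n + 1) := mul_le_mul_of_nonneg_left (h n) hc0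
  exact (hv n).trans (mul_le_of_le_one_left (hu n) hc1)

section Hinv

variable {a b : ℂ} {δ R : ℝ} {w : ℂ × ℂ × ℂ}

theorem mem_Vplus_iff (hδ : 0 ≤ 1 + δ) :
    w ∈ Vplus δ R ↔
      R < ‖w.2.2‖ ∧ ‖w.1‖ < ‖w.2.2‖ ∧ (1 + δ) ^ 2 * ‖w.2.1‖ < ‖w.2.2‖ ^ 2 := by
  have hsqrt : (1 + δ) * Real.sqrt ‖w.2.1‖ < ‖w.2.2‖ ↔ (1 + δ) ^ 2 * ‖w.2.1‖ < ‖w.2.2‖ ^ 2 := by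
    rw [← pow_lt_pow_iff_left₀ (by positivity) (norm_nonneg _) two_ne_zero, mul_pow,
      Real.sq_sqrt (norm_nonneg _)]
  simp only [Vplus, Set.mem_ofPred_eq, gt_iff_lt, max_lt_iff, hsqrt]

theorem norm_Hinv_snd_mul (hb : b ≠ 0) :
    ‖(Hinv a b w).2.1‖ * ‖b‖ = ‖w.2.1 - w.2.2 ^ 2‖ := by
  simp [Hinv, hb]

theorem norm_Hinv_thd_mul (ha : a ≠ 0) :
    ‖(Hinv a b w).2.2‖ * ‖a‖ = ‖w.1 - w.2.2 * (Hinv a b w).2.1‖ := by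
  simp [Hinv, ha]

theorem norm_Hinv_snd_bounds (hb : ‖b‖ = 1 + δ) (hδ : 0 ≤ δ) (hw : w ∈ Vplus δ R) :
    δ * ‖w.2.2‖ ^ 2 ≤ (1 + δ) ^ 2 * ‖(Hinv a b w).2.1‖ ∧
      (1 + δ) * ‖(Hinv a b w).2.1‖ ≤ 2 * ‖w.2.2‖ ^ 2 := by
  obtain ⟨-, -, hy⟩ := (mem_Vplus_iff (by linarith)).mp hw
  have hb0 : b ≠ 0 := norm_ne_zero_iff.mp (by rw [hb]; linarith)
  have hy' : (1 + δ) * ‖(Hinv a b w).2.1‖ = ‖w.2.1 - w.2.2 ^ 2‖ := by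
    rw [← hb, mul_comm, norm_Hinv_snd_mul hb0]
  have hlow := norm_sub_norm_le (w.2.2 ^ 2) w.2.1
  have hup := norm_sub_le w.2.1 (w.2.2 ^ 2)
  rw [norm_pow, norm_sub_rev] at hlow
  rw [norm_pow] at hup
  have hyδ : (1 + δ) * ‖w.2.1‖ ≤ (1 + δ) ^ 2 * ‖w.2.1‖ := by
    nlinarith [mul_nonneg (mul_nonneg (by linarith : (0 : ℝ) ≤ 1 + δ) hδ) (norm_nonneg w.2.1)]
  constructor <;> nlinarith [norm_nonneg w.2.1]

theorem norm_Hinv_thd_lower_bound (ha : a ≠ 0) (hb : ‖b‖ = 1 + δ) (hδ : 0 ≤ δ)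
    (hw : w ∈ Vplus δ R) :
    (δ * ‖w.2.2‖ ^ 2 - (1 + δ) ^ 2) * ‖w.2.2‖ ≤ (1 + δ) ^ 2 * ‖a‖ * ‖(Hinv a b w).2.2‖ := by
  obtain ⟨-, hx, -⟩ := (mem_Vplus_iff (by linarith)).mp hw
  have hy := (norm_Hinv_snd_bounds (a := a) hb hδ hw).1
  have hz : ‖w.2.2‖ * ‖(Hinv a b w).2.1‖ - ‖w.1‖ ≤ ‖(Hinv a b w).2.2‖ * ‖a‖ := by
    rw [norm_Hinv_thd_mul ha, ← norm_mul]
    simpa [norm_sub_rev] using norm_sub_norm_le (w.2.2 * (Hinv a b w).2.1) w.1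
  calc (δ * ‖w.2.2‖ ^ 2 - (1 + δ) ^ 2) * ‖w.2.2‖
      ≤ ‖w.2.2‖ * ((1 + δ) ^ 2 * ‖(Hinv a b w).2.1‖) - (1 + δ) ^ 2 * ‖w.1‖ := by
        nlinarith [norm_nonneg w.2.2]
    _ ≤ (1 + δ) ^ 2 * ‖a‖ * ‖(Hinv a b w).2.2‖ := by nlinarith [sq_nonneg (1 + δ)]

theorem norm_Hinv_thd_growth (ha : a ≠ 0) (hb : ‖b‖ = 1 + δ) (hδ : 0 ≤ δ) (hR : 0 ≤ R)
    (hRz : 2 * (1 + δ) ^ 2 * (1 + (1 + δ) * ‖a‖) ≤ δ * R ^ 2) (hw : w ∈ Vplus δ R) :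
    2 * (1 + δ) * ‖w.2.2‖ ≤ ‖(Hinv a b w).2.2‖ ∧
      δ / (2 * (1 + δ) ^ 2 * ‖a‖) * ‖w.2.2‖ ^ 3 ≤ ‖(Hinv a b w).2.2‖ := by
  have h := norm_Hinv_thd_lower_bound ha hb hδ hw
  have hA : 0 < ‖a‖ := norm_pos_iff.mpr ha
  obtain ⟨hRw, -, -⟩ := (mem_Vplus_iff (by linarith)).mp hw
  have hZ : 0 ≤ ‖w.2.2‖ := hR.trans hRw.le
  have hz : 2 * (1 + δ) ^ 2 * (1 + (1 + δ) * ‖a‖) ≤ δ * ‖w.2.2‖ ^ 2 :=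
    hRz.trans (by gcongr)
  constructor
  · have hpos : 0 < (1 + δ) ^ 2 * ‖a‖ := by positivity
    refine le_of_mul_le_mul_left ?_ hpos
    nlinarith [mul_le_mul_of_nonneg_right hz hZ]
  · have h2 : 2 * (1 + δ) ^ 2 ≤ δ * ‖w.2.2‖ ^ 2 := by
      nlinarith [mul_nonneg (pow_nonneg (by linarith : (0 : ℝ) ≤ 1 + δ) 3) hA.le]
    rw [div_mul_eq_mul_div, div_le_iff₀' (by positivity)]
    nlinarith [mul_le_mul_of_nonneg_right h2 hZ]

theorem mapsTo_Hinv_Vplus (ha : a ≠ 0) (hb : ‖b‖ = 1 + δ) (hδ : 0 ≤ δ) (hR : 0 ≤ R)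
    (hRz : 2 * (1 + δ) ^ 2 * (1 + (1 + δ) * ‖a‖) ≤ δ * R ^ 2) :
    Set.MapsTo (Hinv a b) (Vplus δ R) (Vplus δ R) := by
  intro w hw
  have hδ' : (0 : ℝ) ≤ 1 + δ := by linarith
  obtain ⟨hRw, -, -⟩ := (mem_Vplus_iff hδ').mp hw
  have hgrow := (norm_Hinv_thd_growth ha hb hδ hR hRz hw).1
  have hy := (norm_Hinv_snd_bounds (a := a) hb hδ hw).2
  have hZ : 0 < ‖w.2.2‖ := hR.trans_lt hRw
  have hZZ : ‖w.2.2‖ < ‖(Hinv a b w).2.2‖ := by nlinarith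
  refine (mem_Vplus_iff hδ').mpr ⟨hRw.trans hZZ, hZZ, ?_⟩
  have hsq : (2 * (1 + δ) * ‖w.2.2‖) ^ 2 ≤ ‖(Hinv a b w).2.2‖ ^ 2 :=
    pow_le_pow_left₀ (by positivity) hgrow 2
  nlinarith [mul_le_mul_of_nonneg_left hy hδ']

end Hinv

theorem stmt2_general (a b : ℂ) (ha : a ≠ 0) (δ : ℝ) (hδ : 0 < δ)
    (hbδ : ‖b‖ = 1 + δ) :
    ∃ R₀ > (1 : ℝ), ∀ R > R₀, ∀ w ∈ Vplus δ R, ∃ c > (1 : ℝ),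
      ∀ n : ℕ, c ^ (3 ^ n) ≤ ‖((Hinv a b)^[n] w).2.2‖ := by
  set T := 2 * (1 + δ) ^ 2 * (1 + (1 + δ) * ‖a‖)
  set K := δ / (2 * (1 + δ) ^ 2 * ‖a‖)
  have hk0 : 0 < min 1 K := lt_min one_pos (by positivity)
  have hTδ : 0 < T / δ := by positivity
  have hk : 0 < 1 / min 1 K := one_div_pos.mpr hk0
  refine ⟨1 + T / δ + 1 / min 1 K, by linarith, fun R hR w hw => ?_⟩
  have hRT : T ≤ δ * R ^ 2 := by
    have h : T ≤ δ * R := (div_le_iff₀' hδ).mp (by linarith)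
    have hR1 : 1 ≤ R := by linarith
    nlinarith [mul_le_mul_of_nonneg_left hR1 (mul_nonneg hδ.le (zero_le_one.trans hR1))]
  have hR0 : 0 ≤ R := by linarith
  have horbit : ∀ n, (Hinv a b)^[n] w ∈ Vplus δ R := fun n =>
    (mapsTo_Hinv_Vplus ha hbδ hδ.le hR0 hRT).iterate n hw
  have hz : R < ‖w.2.2‖ := ((mem_Vplus_iff (by linarith)).mp hw).1
  refine ⟨min 1 K * ‖w.2.2‖, (div_lt_iff₀' hk0).mp (by linarith),
    pow_pow_le_of_pow_le_succ (u := fun n => ‖((Hinv a b)^[n] w).2.2‖) three_pos hk0.le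
      (min_le_left _ _) (fun n => norm_nonneg _) fun n => ?_⟩
  rw [Function.iterate_succ_apply']
  refine le_trans ?_ (norm_Hinv_thd_growth ha hbδ hδ.le hR0 hRT (horbit n)).2
  have hkK : min 1 K ^ 2 ≤ K := (pow_le_of_le_one hk0.le (min_le_left _ _) two_ne_zero).trans
    (min_le_right _ _)
  gcongr

/-- there exists `R₀ > 1` such that for all `R > R₀` and every
`w ∈ V⁺` there is a constant `c = c(w) > 1` with `|zₙ| ≥ c^{3ⁿ}` for all
`n ≥ 0`, where `H⁻ⁿ(w) = (xₙ,yₙ,zₙ)`. -/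
theorem stmt2 (a b : ℂ) (ha : a ≠ 0) (hb : b ≠ 0) (δ : ℝ) (hδ : 0 < δ)
    (hbδ : ‖b‖ = 1 + δ) :
    ∃ R₀ > (1 : ℝ), ∀ R > R₀, ∀ w ∈ Vplus δ R, ∃ c > (1 : ℝ),
      ∀ n : ℕ, c ^ (3 ^ n) ≤ ‖((Hinv a b)^[n] w).2.2‖ :=
  stmt2_general a b ha δ hδ hbδ
end

section
/- There exist ε > 0 and R₀ > 1/ε¹⁰ such that for all R > R₀: H(V⁻) ⊂ V⁻, and for every w = (x,y,z) ∈ V⁻, writing H(w) = (x₁,y₁,z₁), one has |xy|/2 < |x₁| < 3|xy|/2 and (1 − |b|ε²)|x|² < |y₁| < (1 + |b|ε²)|x|². -/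
open Complex Filter Topology

/-- `V⁻ = {(x,y,z) : |xy| > max{R, 2|az|, |x|^{3/2}, (1/ε)|y|^{3/2}}}`. -/
noncomputable def Vminus (a : ℂ) (ε R : ℝ) : Set (ℂ × ℂ × ℂ) :=
  {w | ‖w.1 * w.2.1‖ >
    max R (max (2 * ‖a * w.2.2‖)
      (max ((‖w.1‖) ^ ((3 : ℝ) / 2))
        ((1 / ε) * (‖w.2.1‖) ^ ((3 : ℝ) / 2))))}

/-- `U⁺ = ⋃_{n≥0} H⁻ⁿ(V⁻)`, i.e. the points whose forward orbit meets `V⁻`. -/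
noncomputable def Uplus (a b : ℂ) (ε R : ℝ) : Set (ℂ × ℂ × ℂ) :=
  ⋃ n : ℕ, (H a b)^[n] ⁻¹' Vminus a ε R

/-- `K⁺ = ℂ³ \ U⁺`. -/
noncomputable def Kplus (a b : ℂ) (ε R : ℝ) : Set (ℂ × ℂ × ℂ) :=
  (Uplus a b ε R)ᶜ

/-- `Mₙ = max{R, 2|azₙ|, |xₙ|^{3/2}, (1/ε)|yₙ|^{3/2}}` where `Hⁿ(w) = (xₙ,yₙ,zₙ)`. -/
noncomputable def Mseq (a b : ℂ) (ε R : ℝ) (w : ℂ × ℂ × ℂ) (n : ℕ) : ℝ :=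
  max R (max (2 * ‖a * ((H a b)^[n] w).2.2‖)
    (max ((‖((H a b)^[n] w).1‖) ^ ((3 : ℝ) / 2))
      ((1 / ε) * (‖((H a b)^[n] w).2.1‖) ^ ((3 : ℝ) / 2))))

/-!
For `(x, y, z) ∈ V⁻` the conditions defining `V⁻` force `|y| < ε²|x|²`, hence
`ε⁻¹⁰ < R < |xy| < ε²|x|³`, so `|x|` is huge compared with `ε⁻²`. In `H(x, y, z)` the terms
`az` and `by` are then small perturbations of `xy` and `x²`, which gives the four bounds; and
with `|x₁| ≈ |xy|`, `|y₁| ≈ |x|²` the conditions of `V⁻` at `H(x, y, z)` reduce to inequalities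
between powers of `|x|` and `|y|` that the same estimates settle.
-/

lemma rpow_three_halves_lt_iff {s t : ℝ} (hs : 0 ≤ s) (ht : 0 ≤ t) :
    s ^ ((3 : ℝ) / 2) < t ↔ s ^ 3 < t ^ 2 := by
  have hsq : (s ^ ((3 : ℝ) / 2)) ^ 2 = s ^ 3 := by
    rw [← Real.rpow_natCast, ← Real.rpow_mul hs, ← Real.rpow_natCast]
    norm_num
  rw [← hsq, pow_lt_pow_iff_left₀ (by positivity) ht two_ne_zero]

lemma pow_three_lt_mul_sq_of_lt_sq {s t : ℝ} (hs : 0 < s) (h : s < t ^ 2) :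
    s ^ 3 < (s * t) ^ 2 := by
  calc s ^ 3 = s ^ 2 * s := by ring
    _ < s ^ 2 * t ^ 2 := by gcongr
    _ = (s * t) ^ 2 := by ring

lemma norm_add_bounds_of_norm_lt {E : Type*} [SeminormedAddCommGroup E] {u v : E} {δ : ℝ}
    (h : ‖v‖ < δ * ‖u‖) : (1 - δ) * ‖u‖ < ‖u + v‖ ∧ ‖u + v‖ < (1 + δ) * ‖u‖ :=
  ⟨by linarith [norm_le_add_norm_add u v], by linarith [norm_add_le u v]⟩

lemma mem_Vminus_iff {a : ℂ} {ε R : ℝ} (hε : 0 < ε) {w : ℂ × ℂ × ℂ} :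
    w ∈ Vminus a ε R ↔
      R < ‖w.1‖ * ‖w.2.1‖ ∧ 2 * (‖a‖ * ‖w.2.2‖) < ‖w.1‖ * ‖w.2.1‖ ∧
        ‖w.1‖ ^ 3 < (‖w.1‖ * ‖w.2.1‖) ^ 2 ∧ ‖w.2.1‖ ^ 3 < (ε * (‖w.1‖ * ‖w.2.1‖)) ^ 2 := by
  simp only [Vminus, Set.mem_ofPred_eq, gt_iff_lt, max_lt_iff, norm_mul, one_div,
    inv_mul_lt_iff₀ hε]
  rw [rpow_three_halves_lt_iff (norm_nonneg _) (by positivity),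
    rpow_three_halves_lt_iff (norm_nonneg _) (by positivity)]

section Vminus

variable {a b : ℂ} {ε R : ℝ} {w : ℂ × ℂ × ℂ}

lemma norm_snd_lt_of_mem_Vminus (hε : 0 < ε) (hw : w ∈ Vminus a ε R) :
    ‖w.2.1‖ < ε ^ 2 * ‖w.1‖ ^ 2 := by
  obtain ⟨-, -, -, hy⟩ := (mem_Vminus_iff hε).1 hw
  refine lt_of_mul_lt_mul_right (a := ‖w.2.1‖ ^ 2) ?_ (sq_nonneg _)
  linear_combination hy

lemma six_lt_sq_mul_norm_fst_of_mem_Vminus (hε : 0 < ε) (hε12 : ε ≤ 1 / 12)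
    (hR : 1 / ε ^ 10 < R) (hw : w ∈ Vminus a ε R) : 6 < ε ^ 2 * ‖w.1‖ := by
  obtain ⟨hRP, -, -, -⟩ := (mem_Vminus_iff hε).1 hw
  have hPX : ‖w.1‖ * ‖w.2.1‖ ≤ ε ^ 2 * ‖w.1‖ ^ 3 := by
    nlinarith [norm_nonneg w.1, norm_snd_lt_of_mem_Vminus hε hw]
  have h : 1 / ε ^ 10 < ε ^ 2 * ‖w.1‖ ^ 3 := hR.trans (hRP.trans_le hPX)
  rw [div_lt_iff₀ (by positivity)] at h
  have hX : 1 < ε ^ 4 * ‖w.1‖ :=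
    lt_of_pow_lt_pow_left₀ 3 (by positivity) (by linear_combination h)
  nlinarith [sq_nonneg ε]

lemma norm_fst_H_bounds (hw : w ∈ Vminus a ε R) :
    ‖w.1 * w.2.1‖ / 2 < ‖(H a b w).1‖ ∧ ‖(H a b w).1‖ < 3 * ‖w.1 * w.2.1‖ / 2 := by
  have hz : ‖a * w.2.2‖ < 1 / 2 * ‖w.1 * w.2.1‖ := by
    simp only [Vminus, Set.mem_ofPred_eq, gt_iff_lt, max_lt_iff] at hw
    linarith [hw.2.1]
  obtain ⟨h₁, h₂⟩ := norm_add_bounds_of_norm_lt hz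
  simp only [H]
  exact ⟨by linarith, by linarith⟩

lemma norm_snd_H_bounds (hε : 0 < ε) (hb : b ≠ 0) (hw : w ∈ Vminus a ε R) :
    (1 - ‖b‖ * ε ^ 2) * ‖w.1‖ ^ 2 < ‖(H a b w).2.1‖ ∧
      ‖(H a b w).2.1‖ < (1 + ‖b‖ * ε ^ 2) * ‖w.1‖ ^ 2 := by
  have hy : ‖b * w.2.1‖ < ‖b‖ * ε ^ 2 * ‖w.1 ^ 2‖ := by
    rw [norm_mul, norm_pow, mul_assoc]
    exact mul_lt_mul_of_pos_left (norm_snd_lt_of_mem_Vminus hε hw) (norm_pos_iff.2 hb)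
  simpa only [H, norm_pow] using norm_add_bounds_of_norm_lt hy

lemma H_mem_Vminus (hε : 0 < ε) (hε12 : ε ≤ 1 / 12) (hb : b ≠ 0) (hbε : ‖b‖ * ε ^ 2 ≤ 1 / 2)
    (hR : 1 / ε ^ 10 < R) (hRa : 8 * ‖a‖ < R) (hw : w ∈ Vminus a ε R) :
    H a b w ∈ Vminus a ε R := by
  obtain ⟨hRP, -, hX3, -⟩ := (mem_Vminus_iff hε).1 hw
  obtain ⟨hU₁, hU₂⟩ := norm_fst_H_bounds (b := b) hw
  obtain ⟨hV₁, hV₂⟩ := norm_snd_H_bounds hε hb hw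
  have hY := norm_snd_lt_of_mem_Vminus hε hw
  have hεX := six_lt_sq_mul_norm_fst_of_mem_Vminus hε hε12 hR hw
  rw [mem_Vminus_iff hε, show (H a b w).2.2 = w.1 from rfl]
  rw [norm_mul] at hU₁ hU₂
  set X := ‖w.1‖
  set Y := ‖w.2.1‖
  set U := ‖(H a b w).1‖
  set V := ‖(H a b w).2.1‖
  have hε2 : ε ^ 2 ≤ 1 / 144 := by nlinarith
  have hX : 144 * 6 < X := by nlinarith [mul_le_mul_of_nonneg_right hε2 (norm_nonneg w.1)]
  have hV₁' : X ^ 2 / 2 < V := by nlinarith [mul_le_mul_of_nonneg_right hbε (sq_nonneg X)]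
  have hV₂' : V < 3 * X ^ 2 / 2 := by nlinarith [mul_le_mul_of_nonneg_right hbε (sq_nonneg X)]
  have hP : 8 * ‖a‖ < X * Y := hRa.trans hRP
  have hUV : X * Y * X ^ 2 / 4 < U * V := by
    calc X * Y * X ^ 2 / 4 = (X * Y / 2) * (X ^ 2 / 2) := by ring
      _ < U * V := by gcongr
  have hP₀ : 0 < X * Y := by linarith [norm_nonneg a]
  have hXY : X * Y < X * Y * X ^ 2 / 4 := by
    nlinarith [mul_lt_mul_of_pos_left (show (4 : ℝ) < X ^ 2 by nlinarith) hP₀]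
  refine ⟨?_, ?_, ?_, ?_⟩
  · linarith
  · calc 2 * (‖a‖ * X) < X * Y * X / 4 := by nlinarith
      _ ≤ X * Y * X ^ 2 / 4 := by gcongr; nlinarith
      _ < U * V := hUV
  · refine pow_three_lt_mul_sq_of_lt_sq (by linarith) ?_
    calc U < 3 * (X * Y) / 2 := hU₂
      _ ≤ 3 * (ε ^ 2 * X ^ 3) / 2 := by
        nlinarith [mul_lt_mul_of_pos_left hY (show 0 < X by linarith)]
      _ < (X ^ 2 / 2) ^ 2 := by
        nlinarith [mul_lt_mul_of_pos_right (show 6 * ε ^ 2 < X by linarith)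
          (show 0 < X ^ 3 by positivity)]
      _ < V ^ 2 := by gcongr
  · have hVU : V < (ε * U) ^ 2 :=
      calc V < 3 * X ^ 2 / 2 := hV₂'
        _ < ε ^ 2 * X ^ 3 / 4 := by nlinarith
        _ < ε ^ 2 * (X * Y / 2) ^ 2 := by nlinarith
        _ < (ε * U) ^ 2 := by rw [mul_pow]; gcongr
    linear_combination pow_three_lt_mul_sq_of_lt_sq (by linarith) hVU

end Vminus

theorem stmt7_general (a b : ℂ) (hb : b ≠ 0) :
    ∃ ε > (0 : ℝ), ∃ R₀ > 1 / ε ^ 10, ∀ R > R₀,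
      H a b '' Vminus a ε R ⊆ Vminus a ε R ∧
      ∀ w ∈ Vminus a ε R,
        ‖w.1 * w.2.1‖ / 2 < ‖(H a b w).1‖ ∧
        ‖(H a b w).1‖ < 3 * ‖w.1 * w.2.1‖ / 2 ∧
        (1 - ‖b‖ * ε ^ 2) * (‖w.1‖) ^ 2 <
          ‖(H a b w).2.1‖ ∧
        ‖(H a b w).2.1‖ <
          (1 + ‖b‖ * ε ^ 2) * (‖w.1‖) ^ 2 := by
  set ε : ℝ := (12 + ‖b‖)⁻¹
  have hε : 0 < ε := by positivity
  have hε12 : ε ≤ 1 / 12 := by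
    rw [one_div]; exact inv_anti₀ (by norm_num) (by linarith [norm_nonneg b])
  have hbε : ‖b‖ * ε ^ 2 ≤ 1 / 2 := by
    rw [inv_pow, ← div_eq_mul_inv, div_le_iff₀ (by positivity)]
    nlinarith [norm_nonneg b]
  have hε10 : 0 < 1 / ε ^ 10 := by positivity
  refine ⟨ε, hε, 1 / ε ^ 10 + 8 * ‖a‖ + 1, by linarith [norm_nonneg a], fun R hR => ?_⟩
  have hR : 1 / ε ^ 10 < R := by linarith [norm_nonneg a]
  have hRa : 8 * ‖a‖ < R := by linarith
  exact ⟨Set.MapsTo.image_subset fun w hw => H_mem_Vminus hε hε12 hb hbε hR hRa hw,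
    fun w hw => ⟨(norm_fst_H_bounds hw).1, (norm_fst_H_bounds hw).2,
      (norm_snd_H_bounds hε hb hw).1, (norm_snd_H_bounds hε hb hw).2⟩⟩

/-- there exist `ε > 0` and `R₀ > 1/ε¹⁰` such that for all
`R > R₀`: `H(V⁻) ⊂ V⁻`, and for every `w = (x,y,z) ∈ V⁻`, writing
`H(w) = (x₁,y₁,z₁)`, one has `|xy|/2 < |x₁| < 3|xy|/2` and
`(1 − |b|ε²)|x|² < |y₁| < (1 + |b|ε²)|x|²`. -/
theorem stmt7 (a b : ℂ) (ha : a ≠ 0) (hb : b ≠ 0) :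
    ∃ ε > (0 : ℝ), ∃ R₀ > 1 / ε ^ 10, ∀ R > R₀,
      H a b '' Vminus a ε R ⊆ Vminus a ε R ∧
      ∀ w ∈ Vminus a ε R,
        ‖w.1 * w.2.1‖ / 2 < ‖(H a b w).1‖ ∧
        ‖(H a b w).1‖ < 3 * ‖w.1 * w.2.1‖ / 2 ∧
        (1 - ‖b‖ * ε ^ 2) * (‖w.1‖) ^ 2 <
          ‖(H a b w).2.1‖ ∧
        ‖(H a b w).2.1‖ <
          (1 + ‖b‖ * ε ^ 2) * (‖w.1‖) ^ 2 :=
  stmt7_general a b hb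
end

section
/- Suppose b⁴ = 1, c ∈ ℂ satisfies c² = −b, and x ∈ ℂ with |x| ≥ 2. Writing Hⁿ(x,c) = (xₙ,yₙ), one has |y_{2n}| = 1 and (|x|/2)^{3ⁿ} ≤ |x_{2n}| ≤ (2|x|)^{3ⁿ} for all n ≥ 0. In particular the orbit of (x,c) escapes to infinity at exactly the super-exponential rate (const)^{(√3)ⁿ}. -/
/-!
Along the orbit the second coordinate satisfies `y² = -b` at every even time, and on that
curve two steps of `H` act by `(x, y) ↦ (x (x² y - b²), b² y)`. Since `|y| = |b| = 1`, the norm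
`a` of the first coordinate obeys `|a' - a³| ≤ a`, and once `a ≥ 2` this is squeezed between
the exact cubings `a/2 ↦ (a/2)³` and `2a ↦ (2a)³`.
-/

open Complex

/-- The two-dimensional model map `H(x,y) = (xy, x² + by)` on `ℂ²`. -/
noncomputable def H2 (b : ℂ) (p : ℂ × ℂ) : ℂ × ℂ :=
  (p.1 * p.2, p.1 ^ 2 + b * p.2)

section CubicGrowth

variable {a : ℕ → ℝ}

theorem half_pow_three_pow_le_of_abs_sub_cube_le (h0 : 2 ≤ a 0)
    (h : ∀ n, |a (n + 1) - a n ^ 3| ≤ a n) (n : ℕ) : (a 0 / 2) ^ 3 ^ n ≤ a n / 2 := by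
  induction n with
  | zero => simp
  | succ n ih =>
    have hone : 1 ≤ (a 0 / 2) ^ 3 ^ n := one_le_pow₀ (by linarith)
    have han : 2 ≤ a n := by linarith
    have hstep := (abs_le.mp (h n)).1
    calc (a 0 / 2) ^ 3 ^ (n + 1) = ((a 0 / 2) ^ 3 ^ n) ^ 3 := by rw [pow_succ 3 n, pow_mul]
      _ ≤ (a n / 2) ^ 3 := by gcongr
      _ ≤ a (n + 1) / 2 := by
          nlinarith [mul_nonneg (by linarith : 0 ≤ a n) (by nlinarith : 0 ≤ a n ^ 2 - 4)]

theorem two_mul_le_pow_three_pow_of_abs_sub_cube_le (h0 : 2 ≤ a 0)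
    (h : ∀ n, |a (n + 1) - a n ^ 3| ≤ a n) (n : ℕ) : 2 * a n ≤ (2 * a 0) ^ 3 ^ n := by
  induction n with
  | zero => simp
  | succ n ih =>
    have hone : 1 ≤ (a 0 / 2) ^ 3 ^ n := one_le_pow₀ (by linarith)
    have han : 2 ≤ a n := by linarith [half_pow_three_pow_le_of_abs_sub_cube_le h0 h n]
    have hstep := (abs_le.mp (h n)).2
    calc 2 * a (n + 1) ≤ (2 * a n) ^ 3 := by
          nlinarith [mul_nonneg (by linarith : 0 ≤ a n) (by nlinarith : 0 ≤ a n ^ 2 - 4)]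
      _ ≤ ((2 * a 0) ^ 3 ^ n) ^ 3 := by gcongr
      _ = (2 * a 0) ^ 3 ^ (n + 1) := by rw [pow_succ 3 n, pow_mul]

end CubicGrowth

theorem abs_norm_mul_sub_pow_three_le {𝕜 : Type*} [NormedField 𝕜] {u : 𝕜} (hu : ‖u‖ = 1)
    (z w : 𝕜) : |‖z * (z ^ 2 * u - w)‖ - ‖z‖ ^ 3| ≤ ‖z‖ * ‖w‖ := by
  have hz3 : ‖z‖ ^ 3 = ‖z‖ * ‖z ^ 2 * u‖ := by
    rw [norm_mul, norm_pow, hu]; ring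
  rw [norm_mul, hz3, ← mul_sub, abs_mul, abs_norm]
  gcongr
  have := abs_norm_sub_norm_le (z ^ 2 * u - w) (z ^ 2 * u)
  rwa [sub_sub_cancel_left, norm_neg] at this

namespace H2

variable {b : ℂ}

theorem apply_apply_of_snd_sq {p : ℂ × ℂ} (hp : p.2 ^ 2 = -b) :
    H2 b (H2 b p) = (p.1 * (p.1 ^ 2 * p.2 - b ^ 2), b ^ 2 * p.2) := by
  ext
  · simp only [H2]; linear_combination b * p.1 * hp
  · simp only [H2]; linear_combination p.1 ^ 2 * hp

theorem iterate_two_mul_succ (p : ℂ × ℂ) (n : ℕ) :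
    (H2 b)^[2 * (n + 1)] p = H2 b (H2 b ((H2 b)^[2 * n] p)) := by
  rw [show 2 * (n + 1) = 2 * n + 1 + 1 by ring, Function.iterate_succ_apply',
    Function.iterate_succ_apply']

theorem iterate_two_mul_snd_sq (hb4 : b ^ 4 = 1) {p : ℂ × ℂ} (hp : p.2 ^ 2 = -b) (n : ℕ) :
    ((H2 b)^[2 * n] p).2 ^ 2 = -b := by
  induction n with
  | zero => simpa using hp
  | succ n ih =>
    rw [iterate_two_mul_succ, apply_apply_of_snd_sq ih]
    linear_combination b ^ 4 * ih - b * hb4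

theorem norm_iterate_two_mul_snd (hb4 : b ^ 4 = 1) {p : ℂ × ℂ} (hp : p.2 ^ 2 = -b) (n : ℕ) :
    ‖((H2 b)^[2 * n] p).2‖ = 1 := by
  have h8 : ((H2 b)^[2 * n] p).2 ^ 8 = 1 := by
    rw [show 8 = 2 * 4 from rfl, pow_mul, iterate_two_mul_snd_sq hb4 hp n, neg_pow, hb4]
    norm_num
  exact norm_eq_one_of_pow_eq_one h8 (by norm_num)

theorem abs_norm_iterate_two_mul_succ_fst_sub_cube_le (hb4 : b ^ 4 = 1) {p : ℂ × ℂ}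
    (hp : p.2 ^ 2 = -b) (n : ℕ) :
    |‖((H2 b)^[2 * (n + 1)] p).1‖ - ‖((H2 b)^[2 * n] p).1‖ ^ 3| ≤ ‖((H2 b)^[2 * n] p).1‖ := by
  have hb2 : ‖b ^ 2‖ = 1 := by rw [norm_pow, norm_eq_one_of_pow_eq_one hb4 (by norm_num), one_pow]
  rw [iterate_two_mul_succ, apply_apply_of_snd_sq (iterate_two_mul_snd_sq hb4 hp n)]
  have := abs_norm_mul_sub_pow_three_le (norm_iterate_two_mul_snd hb4 hp n)
    ((H2 b)^[2 * n] p).1 (b ^ 2)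
  rwa [hb2, mul_one] at this

end H2

theorem stmt18_general (b : ℂ) (hb4 : b ^ 4 = 1) (c : ℂ)
    (hc : c ^ 2 = -b) (x : ℂ) (hx : 2 ≤ ‖x‖) :
    ∀ n : ℕ,
      ‖((H2 b)^[2 * n] (x, c)).2‖ = 1 ∧
      (‖x‖ / 2) ^ (3 ^ n) ≤ ‖((H2 b)^[2 * n] (x, c)).1‖ ∧
      ‖((H2 b)^[2 * n] (x, c)).1‖ ≤ (2 * ‖x‖) ^ (3 ^ n) := by
  intro n
  set a : ℕ → ℝ := fun n ↦ ‖((H2 b)^[2 * n] (x, c)).1‖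
  have ha0 : a 0 = ‖x‖ := rfl
  have hgrowth : ∀ n, |a (n + 1) - a n ^ 3| ≤ a n :=
    H2.abs_norm_iterate_two_mul_succ_fst_sub_cube_le hb4 hc
  have hlower := half_pow_three_pow_le_of_abs_sub_cube_le (ha0 ▸ hx) hgrowth n
  have hupper := two_mul_le_pow_three_pow_of_abs_sub_cube_le (ha0 ▸ hx) hgrowth n
  have hpos : 0 ≤ a n := norm_nonneg _
  rw [ha0] at hlower hupper
  exact ⟨H2.norm_iterate_two_mul_snd hb4 hc n, by linarith, by linarith⟩

/-- if `b⁴ = 1`, `c² = −b` and `|x| ≥ 2`, then writing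
`Hⁿ(x,c) = (xₙ,yₙ)`, one has `|y_{2n}| = 1` and
`(|x|/2)^{3ⁿ} ≤ |x_{2n}| ≤ (2|x|)^{3ⁿ}` for all `n ≥ 0`; so the orbit of
`(x, c)` escapes to infinity at exactly the rate `(const)^{(√3)ⁿ}`. -/
theorem stmt18 (b : ℂ) (hb : b ≠ 0) (hb4 : b ^ 4 = 1) (c : ℂ)
    (hc : c ^ 2 = -b) (x : ℂ) (hx : 2 ≤ ‖x‖) :
    ∀ n : ℕ,
      ‖((H2 b)^[2 * n] (x, c)).2‖ = 1 ∧
      (‖x‖ / 2) ^ (3 ^ n) ≤ ‖((H2 b)^[2 * n] (x, c)).1‖ ∧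
      ‖((H2 b)^[2 * n] (x, c)).1‖ ≤ (2 * ‖x‖) ^ (3 ^ n) :=
  stmt18_general b hb4 c hc x hx
end
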